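/- arXiv:1106.2326 — 4 statements merged into one kernel-verified Lean document; each statement's English description precedes it below -/
import Mathlib

section
/- For the Kramers–Fokker–Planck quadratic symbol q(x,v,ξ,η) = η² + v²/4 + i(vξ - a x η) with a ∈ ℝ, a ≠ 0, the Hamilton map F satisfies: λ ∈ ℂ is an eigenvalue of 2F if and only if (λ - a/λ)² + 1 = 0 (with λ ≠ 0). -/
open Complex

/-- The Hamilton map of the Kramers–Fokker–Planck quadratic symbol
`q(x,v,ξ,η) = η² + v²/4 + i(vξ - a x η)`. -/
noncomputable def KFPHamiltonMap (a : ℝ) : Matrix (Fin 4) (Fin 4) ℂ :=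
  !![0, I / 2, 0, 0;
     -(a : ℂ) * I / 2, 0, 0, 1;
     0, 0, 0, (a : ℂ) * I / 2;
     0, -1 / 4, -I / 2, 0]

/-!
The eigenvalues of `2F` are the roots of its characteristic polynomial, which a cofactor
expansion shows to be `λ⁴ + (1 - 2a)λ² + a² = λ² ((λ - a/λ)² + 1)`.
-/

open Matrix

theorem Matrix.exists_mulVec_eq_smul_iff_det_sub_eq_zero {n K : Type*} [Fintype n]
    [DecidableEq n] [Field K] (A : Matrix n n K) (μ : K) :
    (∃ v : n → K, v ≠ 0 ∧ A *ᵥ v = μ • v) ↔ (A - μ • 1).det = 0 := by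
  rw [← (A - μ • 1).exists_mulVec_eq_zero_iff]
  refine exists_congr fun v => and_congr_right fun _ => ?_
  rw [sub_mulVec, smul_mulVec, one_mulVec, sub_eq_zero]

theorem det_two_smul_KFPHamiltonMap_sub_smul_one (a : ℝ) (l : ℂ) :
    ((2 : ℂ) • KFPHamiltonMap a - l • 1).det = l ^ 4 + (1 - 2 * a) * l ^ 2 + a ^ 2 := by
  have hM : (2 : ℂ) • KFPHamiltonMap a - l • 1 =
      !![-l, I, 0, 0;
         -a * I, -l, 0, 2;
         0, 0, -l, a * I;
         0, -1 / 2, -I, -l] := by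
    ext i j
    fin_cases i <;> fin_cases j <;>
      simp [KFPHamiltonMap, Matrix.smul_apply] <;> ring
  rw [hM, det_succ_row_zero, Fin.sum_univ_four]
  simp only [det_fin_three, submatrix_apply, of_apply, cons_val', cons_val_fin_one, cons_val,
    Fin.succAbove, Fin.isValue, Fin.coe_ofNat_eq_mod, Fin.reduceLT, Fin.reduceCastSucc,
    Fin.reduceSucc, ↓reduceIte, Fin.lt_one_iff, Fin.reduceEq, Fin.castSucc_zero,
    Fin.succ_zero_eq_one, Fin.succ_one_eq_two, Fin.castSucc_one, lt_self_iff_false]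
  linear_combination (a ^ 2 * (I ^ 2 - 1) + 2 * a * l ^ 2) * I_sq

theorem quartic_eq_sq_mul_of_ne_zero {K : Type*} [Field K] (a : K) {l : K} (hl : l ≠ 0) :
    l ^ 4 + (1 - 2 * a) * l ^ 2 + a ^ 2 = l ^ 2 * ((l - a / l) ^ 2 + 1) := by
  field_simp
  ring

theorem KFP_eigenvalue_characterization_general (a : ℝ) (l : ℂ) (hl : l ≠ 0) :
    (∃ v : Fin 4 → ℂ, v ≠ 0 ∧ ((2 : ℂ) • KFPHamiltonMap a).mulVec v = l • v) ↔
      (l - (a : ℂ) / l) ^ 2 + 1 = 0 := by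
  rw [Matrix.exists_mulVec_eq_smul_iff_det_sub_eq_zero,
    det_two_smul_KFPHamiltonMap_sub_smul_one, quartic_eq_sq_mul_of_ne_zero _ hl,
    mul_eq_zero, or_iff_right (pow_ne_zero 2 hl)]

/-- For the Kramers–Fokker–Planck Hamilton map `F`, a nonzero `λ ∈ ℂ` is an eigenvalue
of `2F` if and only if `(λ - a/λ)² + 1 = 0`. -/
theorem KFP_eigenvalue_characterization (a : ℝ) (ha : a ≠ 0) (l : ℂ) (hl : l ≠ 0) :
    (∃ v : Fin 4 → ℂ, v ≠ 0 ∧ ((2 : ℂ) • KFPHamiltonMap a).mulVec v = l • v) ↔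
      (l - (a : ℂ) / l) ^ 2 + 1 = 0 :=
  KFP_eigenvalue_characterization_general a l hl
end

section
/- For a < 0, the function u₀(x,v) = exp((a/4)√(1-4a) x² - a x v - (√(1-4a)/4) v²) is a Schwartz function and satisfies q^w u₀ = (√(1-4a)/2) u₀, where q^w = -∂_v² + v²/4 + v∂_x - a x ∂_v. -/
/-!
The exponent `φ(x, v) = (a/4) s x² - a x v - (s/4) v²`, `s = √(1 - 4a)`, is a negative definite
quadratic form, so it has temperate growth and `φ(p) ≤ c - δ ‖p‖` for some `δ > 0`. By Faà di
Bruno every derivative of `exp ∘ φ` is bounded by a polynomial times `exp ∘ φ`, and the linear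
decay of `φ` beats every polynomial. The eigenvalue equation is a direct computation: in each
variable `u₀` is the exponential of a quadratic polynomial, and `q^w u₀ - (s/2) u₀` collapses to
`(v²/4)(1 - 4a - s²) u₀ = 0`.
-/

open Real
open scoped Nat SchwartzMap

lemma pow_mul_exp_neg_mul_le {δ t : ℝ} (hδ : 0 < δ) (ht : 0 ≤ t) (M : ℕ) :
    t ^ M * exp (-(δ * t)) ≤ M ! / δ ^ M := by
  have h := pow_div_factorial_le_exp _ (mul_nonneg hδ.le ht) M
  rw [div_le_iff₀ (by positivity)] at h
  rw [exp_neg, ← div_eq_mul_inv, div_le_div_iff₀ (exp_pos _) (by positivity)]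
  linarith [mul_pow δ t M, mul_comm (t ^ M) (δ ^ M)]

section TemperateGrowth

variable {E : Type*} [NormedAddCommGroup E] [NormedSpace ℝ E] {Q : E → ℝ}

theorem Function.HasTemperateGrowth.norm_iteratedFDeriv_exp_comp_le
    (hQ : Q.HasTemperateGrowth) (n : ℕ) :
    ∃ (m : ℕ) (C : ℝ), 0 ≤ C ∧ ∀ x,
      ‖iteratedFDeriv ℝ n (fun y => exp (Q y)) x‖ ≤ C * (1 + ‖x‖) ^ m * exp (Q x) := by
  obtain ⟨k, C, hC, hQn⟩ := hQ.norm_iteratedFDeriv_le_uniform n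
  refine ⟨k * n, n ! * (1 + C) ^ n, by positivity, fun x => ?_⟩
  have hexp : ∀ i ≤ n, ‖iteratedFDeriv ℝ i exp (Q x)‖ ≤ exp (Q x) := fun i _ => by
    rw [norm_iteratedFDeriv_eq_norm_iteratedDeriv, iteratedDeriv_eq_iterate, iter_deriv_exp,
      norm_of_nonneg (exp_pos _).le]
  have hQi : ∀ i, 1 ≤ i → i ≤ n →
      ‖iteratedFDeriv ℝ i Q x‖ ≤ ((1 + C) * (1 + ‖x‖) ^ k) ^ i := fun i hi hin =>
    calc _ ≤ C * (1 + ‖x‖) ^ k := hQn i hin x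
      _ ≤ (1 + C) * (1 + ‖x‖) ^ k := by gcongr; linarith
      _ ≤ _ := le_self_pow₀ (one_le_mul_of_one_le_of_one_le (by linarith)
          (one_le_pow₀ (by linarith [norm_nonneg x]))) (by omega)
  calc ‖iteratedFDeriv ℝ n (exp ∘ Q) x‖
      ≤ n ! * exp (Q x) * ((1 + C) * (1 + ‖x‖) ^ k) ^ n :=
        norm_iteratedFDeriv_comp_le contDiff_exp hQ.1 (mod_cast le_top) x hexp hQi
    _ = _ := by rw [mul_pow, ← pow_mul]; ring

theorem exists_schwartzMap_eq_exp_of_hasTemperateGrowth (hQ : Q.HasTemperateGrowth)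
    (hdecay : ∃ c, ∃ δ > 0, ∀ x, Q x ≤ c - δ * ‖x‖) :
    ∃ f : 𝓢(E, ℝ), ∀ x, f x = exp (Q x) := by
  obtain ⟨c, δ, hδ, hdecay⟩ := hdecay
  refine ⟨⟨fun x => exp (Q x), contDiff_exp.comp hQ.1, fun k n => ?_⟩, fun _ => rfl⟩
  obtain ⟨m, C, hC, hbound⟩ := hQ.norm_iteratedFDeriv_exp_comp_le n
  refine ⟨C * exp (c + δ) * ((k + m)! / δ ^ (k + m)), fun x => ?_⟩
  have hx : ‖x‖ ≤ 1 + ‖x‖ := by linarith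
  have hexp : exp (Q x) ≤ exp (c + δ) * exp (-(δ * (1 + ‖x‖))) := by
    rw [← exp_add]; gcongr; linarith [hdecay x]
  calc ‖x‖ ^ k * ‖iteratedFDeriv ℝ n (fun y => exp (Q y)) x‖
      ≤ (1 + ‖x‖) ^ k * (C * (1 + ‖x‖) ^ m * exp (Q x)) := by gcongr; exact hbound x
    _ = C * (1 + ‖x‖) ^ (k + m) * exp (Q x) := by ring
    _ ≤ C * (1 + ‖x‖) ^ (k + m) * (exp (c + δ) * exp (-(δ * (1 + ‖x‖)))) := by gcongr
    _ = C * exp (c + δ) * ((1 + ‖x‖) ^ (k + m) * exp (-(δ * (1 + ‖x‖)))) := by ring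
    _ ≤ C * exp (c + δ) * ((k + m)! / δ ^ (k + m)) := by
        gcongr; exact pow_mul_exp_neg_mul_le hδ (by positivity) _

end TemperateGrowth

-- `(α + γ) (α x² + 2β x v + γ v²) - (αγ - β²) (x² + v²) = (α x + β v)² + (β x + γ v)²`
lemma det_div_trace_mul_le_quadratic {α β γ : ℝ} (h : 0 < α + γ) (x v : ℝ) :
    (α * γ - β ^ 2) / (α + γ) * (x ^ 2 + v ^ 2) ≤ α * x ^ 2 + 2 * β * x * v + γ * v ^ 2 := by
  rw [div_mul_eq_mul_div, div_le_iff₀ h]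
  nlinarith [sq_nonneg (α * x + β * v), sq_nonneg (β * x + γ * v)]

lemma Prod.norm_sq_le (p : ℝ × ℝ) : ‖p‖ ^ 2 ≤ p.1 ^ 2 + p.2 ^ 2 := by
  rw [Prod.norm_def, Real.norm_eq_abs, Real.norm_eq_abs]
  rcases le_total |p.1| |p.2| with h | h
  · rw [max_eq_right h, sq_abs]; nlinarith [sq_nonneg p.1]
  · rw [max_eq_left h, sq_abs]; nlinarith [sq_nonneg p.2]

noncomputable def kfpExponent (a s : ℝ) (p : ℝ × ℝ) : ℝ :=
  (a / 4) * s * p.1 ^ 2 - a * p.1 * p.2 - (s / 4) * p.2 ^ 2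

lemma hasTemperateGrowth_kfpExponent (a s : ℝ) : (kfpExponent a s).HasTemperateGrowth := by
  have h₁ : Function.HasTemperateGrowth (fun p : ℝ × ℝ => p.1) :=
    (ContinuousLinearMap.fst ℝ ℝ ℝ).hasTemperateGrowth
  have h₂ : Function.HasTemperateGrowth (fun p : ℝ × ℝ => p.2) :=
    (ContinuousLinearMap.snd ℝ ℝ ℝ).hasTemperateGrowth
  unfold kfpExponent
  fun_prop

lemma kfpExponent_le {a s : ℝ} (ha : a < 0) (hs : s ^ 2 = 1 - 4 * a) (hs₀ : 0 < s) :
    ∃ c, ∃ δ > 0, ∀ p, kfpExponent a s p ≤ c - δ * ‖p‖ := by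
  set δ := -a / (4 * s * (1 - a))
  have hδ : 0 < δ := div_pos (by linarith) (by nlinarith)
  have hdet : ((-(a / 4) * s) * (s / 4) - (a / 2) ^ 2) / (-(a / 4) * s + s / 4) = δ := by
    rw [div_eq_div_iff (by nlinarith) (by nlinarith)]
    linear_combination (-a * s * (1 - a) / 4) * hs
  refine ⟨δ / 4, δ, hδ, fun p => ?_⟩
  have hform := det_div_trace_mul_le_quadratic (α := -(a / 4) * s) (β := a / 2) (γ := s / 4)
    (by nlinarith) p.1 p.2
  rw [hdet] at hform
  have hnorm := mul_le_mul_of_nonneg_left (Prod.norm_sq_le p) hδ.le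
  unfold kfpExponent
  nlinarith [mul_nonneg hδ.le (sq_nonneg (‖p‖ - 1 / 2))]

lemma hasDerivAt_exp_quadratic (c₀ c₁ c₂ w : ℝ) :
    HasDerivAt (fun w => exp (c₀ + c₁ * w + c₂ * w ^ 2))
      ((c₁ + 2 * c₂ * w) * exp (c₀ + c₁ * w + c₂ * w ^ 2)) w := by
  have h := (((hasDerivAt_id' w).const_mul c₁).const_add c₀).fun_add
    ((hasDerivAt_pow 2 w).const_mul c₂)
  convert h.exp using 1
  push_cast; ring

lemma deriv_exp_quadratic (c₀ c₁ c₂ w : ℝ) :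
    deriv (fun w => exp (c₀ + c₁ * w + c₂ * w ^ 2)) w =
      (c₁ + 2 * c₂ * w) * exp (c₀ + c₁ * w + c₂ * w ^ 2) :=
  (hasDerivAt_exp_quadratic c₀ c₁ c₂ w).deriv

lemma deriv_deriv_exp_quadratic (c₀ c₁ c₂ w : ℝ) :
    deriv (deriv (fun w => exp (c₀ + c₁ * w + c₂ * w ^ 2))) w =
      ((c₁ + 2 * c₂ * w) ^ 2 + 2 * c₂) * exp (c₀ + c₁ * w + c₂ * w ^ 2) := by
  have hlin : HasDerivAt (fun w => c₁ + 2 * c₂ * w) (2 * c₂) w := by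
    simpa using ((hasDerivAt_id w).const_mul (2 * c₂)).const_add c₁
  rw [funext (deriv_exp_quadratic c₀ c₁ c₂),
    (hlin.fun_mul (hasDerivAt_exp_quadratic c₀ c₁ c₂ w)).deriv]
  ring

/-- For `a < 0`, the function
`u₀(x,v) = exp((a/4)√(1-4a) x² - a x v - (√(1-4a)/4) v²)` is a Schwartz function and
satisfies `q^w u₀ = (√(1-4a)/2) u₀`, where `q^w = -∂_v² + v²/4 + v ∂_x - a x ∂_v`. -/
theorem KFP_ground_state_neg_a (a : ℝ) (ha : a < 0)
    (u₀ : ℝ → ℝ → ℝ)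
    (hu₀ : ∀ x v, u₀ x v = Real.exp ((a / 4) * Real.sqrt (1 - 4 * a) * x^2
        - a * x * v - (Real.sqrt (1 - 4 * a) / 4) * v^2)) :
    (∃ f : SchwartzMap (ℝ × ℝ) ℝ, ∀ x v, f (x, v) = u₀ x v) ∧
    ∀ x v : ℝ,
      -(deriv (deriv (fun w => u₀ x w)) v)
        + (v^2 / 4) * u₀ x v
        + v * deriv (fun s => u₀ s v) x
        - a * x * deriv (fun w => u₀ x w) v
      = (Real.sqrt (1 - 4 * a) / 2) * u₀ x v := by
  set s := √(1 - 4 * a)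
  have hs : s ^ 2 = 1 - 4 * a := sq_sqrt (by linarith)
  have hs₀ : 0 < s := sqrt_pos.2 (by linarith)
  refine ⟨?_, fun x v => ?_⟩
  · obtain ⟨f, hf⟩ := exists_schwartzMap_eq_exp_of_hasTemperateGrowth
      (hasTemperateGrowth_kfpExponent a s) (kfpExponent_le ha hs hs₀)
    exact ⟨f, fun x v => by rw [hf, hu₀]; rfl⟩
  have hv : (fun w => u₀ x w) =
      fun w => exp (a / 4 * s * x ^ 2 + -a * x * w + -(s / 4) * w ^ 2) :=
    funext fun w => by rw [hu₀]; ring_nf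
  have hx : (fun t => u₀ t v) =
      fun t => exp (-(s / 4) * v ^ 2 + -a * v * t + a / 4 * s * t ^ 2) :=
    funext fun t => by rw [hu₀]; ring_nf
  have hv' : u₀ x v = _ := congrFun hv v
  have hx' : u₀ x v = _ := congrFun hx x
  rw [hv, hx, deriv_deriv_exp_quadratic, deriv_exp_quadratic, deriv_exp_quadratic, ← hv', ← hx']
  linear_combination (-(v ^ 2 / 4) * u₀ x v) * hs
end

section
/- If a complex-valued quadratic form a = Re a + i b on R^n (n ≥ 1) satisfies λ₁ e^{-a(x)} + λ₂ e^{-conj(a)(x)} = 0 for all x ∈ R^n with (λ₁, λ₂) ≠ (0,0), then the imaginary part b of a is identically zero and λ₁ = -λ₂. -/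
open Complex

/-!
Evaluating at `x = 0` gives `λ₁ + λ₂ = 0`, so `λ₁ ≠ 0` and `e^{-q(x)} = e^{-conj(q(x))}` for all
`x`, i.e. `Im q(x) ∈ πℤ`. Since `q` is homogeneous of degree two, `Im q(√s • x) = s · Im q(x)`
for every `s ≥ 0`; unless `Im q(x) = 0` this half-line contains `±π/2 ∉ πℤ`.
-/

theorem map_smul_smul_of_isLinearMap {R M N : Type*} [CommSemiring R] [AddCommMonoid M]
    [Module R M] [AddCommMonoid N] [Module R N] {B : M → M → N}
    (hB₁ : ∀ x, IsLinearMap R (fun y => B x y)) (hB₂ : ∀ y, IsLinearMap R (fun x => B x y))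
    (s t : R) (x y : M) : B (s • x) (t • y) = (s * t) • B x y := by
  rw [(hB₂ (t • y)).map_smul, (hB₁ x).map_smul, smul_smul]

theorem Complex.exists_im_eq_int_mul_pi_of_exp_neg_eq_exp_neg_conj {z : ℂ}
    (h : exp (-z) = exp (-(starRingEnd ℂ) z)) : ∃ k : ℤ, z.im = k * Real.pi := by
  obtain ⟨k, hk⟩ := exp_eq_exp_iff_exists_int.mp h
  refine ⟨-k, ?_⟩
  have him : -z.im = z.im + k * (2 * Real.pi) := by simpa using congrArg im hk
  push_cast
  linarith

theorem eq_zero_of_forall_nonneg_mul_eq_int_mul_pi {c : ℝ}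
    (h : ∀ s : ℝ, 0 ≤ s → ∃ k : ℤ, s * c = k * Real.pi) : c = 0 := by
  by_contra hc
  have habs : 0 < |c| := abs_pos.mpr hc
  obtain ⟨k, hk⟩ := h (Real.pi / (2 * |c|)) (by positivity)
  have hhalf : ((|k| : ℤ) : ℝ) * Real.pi = Real.pi / 2 := by
    calc ((|k| : ℤ) : ℝ) * Real.pi = |(k : ℝ) * Real.pi| := by
          rw [abs_mul, abs_of_pos Real.pi_pos, Int.cast_abs]
      _ = |Real.pi / (2 * |c|) * c| := by rw [hk]
      _ = Real.pi / 2 := by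
        rw [abs_mul, abs_of_pos (by positivity)]
        field_simp
  have : (2 * |k| : ℤ) = 1 := by
    have : (2 * |k| : ℝ) = 1 := by nlinarith [Real.pi_pos]
    exact_mod_cast this
  omega

theorem linear_dependence_of_gaussians_general (n : ℕ)
    (q : (Fin n → ℝ) → ℂ)
    (B : (Fin n → ℝ) → (Fin n → ℝ) → ℂ)
    (hB₁ : ∀ x, IsLinearMap ℝ (fun y => B x y))
    (hB₂ : ∀ y, IsLinearMap ℝ (fun x => B x y))
    (hq : ∀ x, q x = B x x)
    (l₁ l₂ : ℂ) (hl : ¬(l₁ = 0 ∧ l₂ = 0))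
    (hdep : ∀ x, l₁ * Complex.exp (-q x) + l₂ * Complex.exp (-(starRingEnd ℂ) (q x)) = 0) :
    (∀ x, (q x).im = 0) ∧ l₁ = -l₂ := by
  have hq0 : q 0 = 0 := by rw [hq]; exact (hB₂ 0).map_zero
  have hsum : l₁ + l₂ = 0 := by simpa [hq0] using hdep 0
  have hl₁ : l₁ ≠ 0 := fun h => hl ⟨h, by linear_combination hsum - h⟩
  have hexp : ∀ x, exp (-q x) = exp (-(starRingEnd ℂ) (q x)) := fun x =>
    mul_left_cancel₀ hl₁ (by linear_combination hdep x - exp (-(starRingEnd ℂ) (q x)) * hsum)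
  refine ⟨fun x => eq_zero_of_forall_nonneg_mul_eq_int_mul_pi fun s hs => ?_,
    by linear_combination hsum⟩
  have hscale : q (√s • x) = s • q x := by
    rw [hq, hq, map_smul_smul_of_isLinearMap hB₁ hB₂, Real.mul_self_sqrt hs]
  simpa [hscale] using exists_im_eq_int_mul_pi_of_exp_neg_eq_exp_neg_conj (hexp (√s • x))

/-- If a complex-valued quadratic form `q` on `ℝⁿ` (`n ≥ 1`) satisfies
`λ₁ e^{-q(x)} + λ₂ e^{-conj(q)(x)} = 0` for all `x` with `(λ₁, λ₂) ≠ (0,0)`, then the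
imaginary part of `q` is identically zero and `λ₁ = -λ₂`. -/
theorem linear_dependence_of_gaussians (n : ℕ) (hn : 1 ≤ n)
    (q : (Fin n → ℝ) → ℂ)
    (B : (Fin n → ℝ) → (Fin n → ℝ) → ℂ)
    (hB₁ : ∀ x, IsLinearMap ℝ (fun y => B x y))
    (hB₂ : ∀ y, IsLinearMap ℝ (fun x => B x y))
    (hBsymm : ∀ x y, B x y = B y x)
    (hq : ∀ x, q x = B x x)
    (l₁ l₂ : ℂ) (hl : ¬(l₁ = 0 ∧ l₂ = 0))
    (hdep : ∀ x, l₁ * Complex.exp (-q x) + l₂ * Complex.exp (-(starRingEnd ℂ) (q x)) = 0) :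
    (∀ x, (q x).im = 0) ∧ l₁ = -l₂ :=
  linear_dependence_of_gaussians_general n q B hB₁ hB₂ hq l₁ l₂ hl hdep
end

section
/- The Gaussian u₀(x,y,z) = exp(-(β/4)(ω²x² + y² + |z|²)) satisfies H̃ u₀ = μ₀ u₀ with μ₀ = (1/2)Σ_{j=1}^m αⱼ, where H̃ = y∂_x - ω²x∂_y + (Σλⱼzⱼ)∂_y - yΣλⱼ∂_{zⱼ} + Σαⱼ(-β⁻¹∂_{zⱼ}² + (β/4)zⱼ²). -/
/-!
Write `u₀ = exp (-(β/4) q)` with `q = ω²x² + y² + |z|²`. The first-order part of `H̃` is a vector field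
`V` with `V q = 2(yω²x + (λ·z - ω²x) y - y λ·z) = 0`, so it kills `u₀`. In each `zⱼ` the remaining part
`-β⁻¹∂² + (β/4)zⱼ²` is a harmonic oscillator whose ground state `exp(-(β/4)zⱼ²)` has eigenvalue `1/2`.
-/

open Finset Function Real

lemma hasDerivAt_exp_mul_add_mul_sq (c a b s : ℝ) :
    HasDerivAt (fun t => exp (c * (a + b * t ^ 2))) (2 * c * b * s * exp (c * (a + b * s ^ 2))) s := by
  convert (((hasDerivAt_pow 2 s).const_mul b).const_add a).const_mul c |>.exp using 1
  ring

lemma deriv_exp_mul_add_mul_sq (c a b : ℝ) :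
    deriv (fun t => exp (c * (a + b * t ^ 2))) = fun s => 2 * c * b * s * exp (c * (a + b * s ^ 2)) :=
  funext fun s => (hasDerivAt_exp_mul_add_mul_sq c a b s).deriv

lemma deriv_deriv_exp_mul_add_mul_sq (c a b s : ℝ) :
    deriv (deriv fun t => exp (c * (a + b * t ^ 2))) s
      = (2 * c * b + 4 * c ^ 2 * b ^ 2 * s ^ 2) * exp (c * (a + b * s ^ 2)) := by
  rw [deriv_exp_mul_add_mul_sq]
  exact (((hasDerivAt_id' s).const_mul (2 * c * b)).mul
    (hasDerivAt_exp_mul_add_mul_sq c a b s)).deriv.trans (by ring)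

lemma sum_update_sq {ι : Type*} [Fintype ι] [DecidableEq ι] (z : ι → ℝ) (j : ι) (t : ℝ) :
    ∑ k, update z j t k ^ 2 = (∑ k, z k ^ 2 - z j ^ 2) + t ^ 2 := by
  simp only [← add_sum_erase _ _ (mem_univ j), update_self]
  rw [sum_congr rfl fun k hk => by rw [update_of_ne (ne_of_mem_erase hk)]]
  ring

noncomputable def gaussian {ι : Type*} [Fintype ι] (β ω x y : ℝ) (z : ι → ℝ) : ℝ :=
  exp (-(β / 4) * (ω ^ 2 * x ^ 2 + y ^ 2 + ∑ j, z j ^ 2))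

section gaussian

variable {ι : Type*} [Fintype ι] (β ω x y : ℝ) (z : ι → ℝ)

lemma deriv_gaussian_fst :
    deriv (fun s => gaussian β ω s y z) x = -(β / 2) * ω ^ 2 * x * gaussian β ω x y z := by
  have h : (fun s => gaussian β ω s y z)
      = fun s => exp (-(β / 4) * ((y ^ 2 + ∑ j, z j ^ 2) + ω ^ 2 * s ^ 2)) := by
    funext s; simp only [gaussian]; ring_nf
  rw [h, deriv_exp_mul_add_mul_sq, gaussian]
  ring_nf

lemma deriv_gaussian_snd :
    deriv (fun t => gaussian β ω x t z) y = -(β / 2) * y * gaussian β ω x y z := by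
  have h : (fun t => gaussian β ω x t z)
      = fun t => exp (-(β / 4) * ((ω ^ 2 * x ^ 2 + ∑ j, z j ^ 2) + 1 * t ^ 2)) := by
    funext t; simp only [gaussian]; ring_nf
  rw [h, deriv_exp_mul_add_mul_sq, gaussian]
  ring_nf

variable [DecidableEq ι] (j : ι)

lemma gaussian_update_eq :
    (fun t => gaussian β ω x y (update z j t))
      = fun t => exp (-(β / 4) * ((ω ^ 2 * x ^ 2 + y ^ 2 + ∑ k, z k ^ 2 - z j ^ 2) + 1 * t ^ 2)) := by
  funext t; simp only [gaussian, sum_update_sq]; ring_nf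

lemma deriv_gaussian_update :
    deriv (fun t => gaussian β ω x y (update z j t)) (z j)
      = -(β / 2) * z j * gaussian β ω x y z := by
  rw [gaussian_update_eq, deriv_exp_mul_add_mul_sq, gaussian]
  ring_nf

lemma deriv_deriv_gaussian_update :
    deriv (deriv fun t => gaussian β ω x y (update z j t)) (z j)
      = (β ^ 2 / 4 * z j ^ 2 - β / 2) * gaussian β ω x y z := by
  rw [gaussian_update_eq, deriv_deriv_exp_mul_add_mul_sq, gaussian]
  ring_nf

end gaussian

theorem GLE_gaussian_ground_state_general (m : ℕ) (α lam : Fin m → ℝ) (ω β : ℝ)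
    (hβ : 0 < β)
    (u₀ : ℝ → ℝ → (Fin m → ℝ) → ℝ)
    (hu₀ : ∀ x y z, u₀ x y z =
      Real.exp (-(β / 4) * (ω ^ 2 * x ^ 2 + y ^ 2 + ∑ j, (z j) ^ 2))) :
    ∀ (x y : ℝ) (z : Fin m → ℝ),
      y * deriv (fun s => u₀ s y z) x
        - ω ^ 2 * x * deriv (fun t => u₀ x t z) y
        + (∑ j, lam j * z j) * deriv (fun t => u₀ x t z) y
        - y * ∑ j, lam j * deriv (fun t => u₀ x y (Function.update z j t)) (z j)
        + ∑ j, α j *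
            (-(β⁻¹ * deriv (deriv (fun t => u₀ x y (Function.update z j t))) (z j))
              + (β / 4) * (z j) ^ 2 * u₀ x y z)
      = ((1 / 2) * ∑ j, α j) * u₀ x y z := by
  obtain rfl : u₀ = gaussian β ω := funext₃ hu₀
  intro x y z
  set G := gaussian β ω x y z
  simp only [deriv_gaussian_fst, deriv_gaussian_snd, deriv_gaussian_update,
    deriv_deriv_gaussian_update]
  have transport_z : ∑ j, lam j * (-(β / 2) * z j * G) = -(β / 2) * (∑ j, lam j * z j) * G := by
    rw [mul_sum, sum_mul]
    exact sum_congr rfl fun j _ => by ring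
  have oscillator : ∑ j, α j * (-(β⁻¹ * ((β ^ 2 / 4 * z j ^ 2 - β / 2) * G)) + β / 4 * z j ^ 2 * G)
      = (1 / 2 * ∑ j, α j) * G := by
    rw [mul_sum, sum_mul]
    refine sum_congr rfl fun j _ => ?_
    field_simp
    ring
  rw [transport_z, oscillator]
  ring

/-- The Gaussian `u₀(x,y,z) = exp(-(β/4)(ω²x² + y² + |z|²))` satisfies
`H̃ u₀ = μ₀ u₀` with `μ₀ = (1/2)Σⱼ αⱼ`, where
`H̃ = y∂ₓ - ω²x∂_y + (Σλⱼzⱼ)∂_y - yΣλⱼ∂_{zⱼ} + Σαⱼ(-β⁻¹∂_{zⱼ}² + (β/4)zⱼ²)`. -/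
theorem GLE_gaussian_ground_state (m : ℕ) (α lam : Fin m → ℝ) (ω β : ℝ)
    (hω : ω ≠ 0) (hβ : 0 < β) (hα : ∀ j, 0 < α j)
    (u₀ : ℝ → ℝ → (Fin m → ℝ) → ℝ)
    (hu₀ : ∀ x y z, u₀ x y z =
      Real.exp (-(β / 4) * (ω ^ 2 * x ^ 2 + y ^ 2 + ∑ j, (z j) ^ 2))) :
    ∀ (x y : ℝ) (z : Fin m → ℝ),
      y * deriv (fun s => u₀ s y z) x
        - ω ^ 2 * x * deriv (fun t => u₀ x t z) y
        + (∑ j, lam j * z j) * deriv (fun t => u₀ x t z) y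
        - y * ∑ j, lam j * deriv (fun t => u₀ x y (Function.update z j t)) (z j)
        + ∑ j, α j *
            (-(β⁻¹ * deriv (deriv (fun t => u₀ x y (Function.update z j t))) (z j))
              + (β / 4) * (z j) ^ 2 * u₀ x y z)
      = ((1 / 2) * ∑ j, α j) * u₀ x y z :=
  GLE_gaussian_ground_state_general m α lam ω β hβ u₀ hu₀
end
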